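/- Preservation of knowledge properties under the successor-state axiom for K (Scherl–Levesque, as used in the paper): let W be a type of initial worlds, A a type of actions, R : W → W → Prop an equivalence relation, and Poss, SF : A → (W × List A) → Prop arbitrary. Define the situational accessibility relation K on W × List A by recursion on histories (built by appending actions): K (w', []) (w, []) iff R w' w; K (w', l' ++ [a']) (w, l ++ [a]) iff a' = a ∧ K (w', l') (w, l) ∧ Poss a (w', l') ∧ (SF a (w', l') ↔ SF a (w, l)); and K holds in no other case. Call a situation (w, l) executable iff Poss a (w, l₀) for every decomposition of l into a prefix l₀ followed by an action a (followed by the rest). Then: (i) K-related situations have the same action history (K (w', l') (w, l) implies l' = l); (ii) K is transitive; (iii) K is Euclidean (K s₁ s ∧ K s₂ s implies K s₂ s₁); and (iv) K is reflexive on executable situations (if (w, l) is executable then K (w, l) (w, l)). -/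
import Mathlib


/-- Situations are pairs (initial world, list of actions performed so far, oldest
first). The Scherl–Levesque knowledge-accessibility relation `K`: initial situations
are related exactly via the initial accessibility relation `R`, and the situations
accessible from `do(a, s) = (w, l ++ [a])` are exactly the `(w', l' ++ [a])` with
`(w', l')` accessible from `(w, l)`, `a` possible in `(w', l')`, and the sensing
result of `a` agreeing between `(w', l')` and `(w, l)`. As an inductive predicate,
`K` holds in no other case. -/
inductive K {W A : Type*} (R : W → W → Prop) (Poss SF : A → W × List A → Prop) :
    W × List A → W × List A → Prop
  | init (w w' : W) : R w' w → K R Poss SF (w', []) (w, [])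
  | succ (w w' : W) (l l' : List A) (a : A) :
      K R Poss SF (w', l') (w, l) → Poss a (w', l') → (SF a (w', l') ↔ SF a (w, l)) →
      K R Poss SF (w', l' ++ [a]) (w, l ++ [a])

/-- A situation is executable iff every action in its history was possible in the
situation where it was performed. -/
def Executable {W A : Type*} (Poss : A → W × List A → Prop) (s : W × List A) : Prop :=
  ∀ (l₀ : List A) (a : A) (l₁ : List A), s.2 = l₀ ++ a :: l₁ → Poss a (s.1, l₀)

private lemma K_cases {W A : Type*} {R : W → W → Prop} {Poss SF : A → W × List A → Prop}
    {s t : W × List A} (h : K R Poss SF s t) :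
    (∃ w w', s = (w', []) ∧ t = (w, []) ∧ R w' w) ∨
    (∃ w w' l l' a, s = (w', l' ++ [a]) ∧ t = (w, l ++ [a]) ∧
      K R Poss SF (w', l') (w, l) ∧ Poss a (w', l') ∧ (SF a (w', l') ↔ SF a (w, l))) := by
  cases h with
  | init w w' hr => exact Or.inl ⟨w, w', rfl, rfl, hr⟩
  | succ w w' l l' a hk hp hsf => exact Or.inr ⟨w, w', l, l', a, rfl, rfl, hk, hp, hsf⟩

private lemma K_trans {W A : Type*} {R : W → W → Prop} (hR : Equivalence R)
    {Poss SF : A → W × List A → Prop} :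
    ∀ {s₁ s₂ s₃ : W × List A},
      K R Poss SF s₁ s₂ → K R Poss SF s₂ s₃ → K R Poss SF s₁ s₃ := by
  intro s₁ s₂ s₃ h12
  induction h12 generalizing s₃ with
  | init w w' hr =>
    intro h23
    rcases K_cases h23 with ⟨w₃, w₂, he, rfl, hr'⟩ | ⟨_, _, _, _, _, he, _, _, _, _⟩
    · obtain ⟨rfl, -⟩ := Prod.mk.injEq .. ▸ he
      exact K.init _ _ (hR.trans hr hr')
    · exact absurd (Prod.mk.injEq .. ▸ he).2 (by simp)
  | succ w w' l l' a hk hp hsf ih =>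
    intro h23
    rcases K_cases h23 with ⟨_, _, he, _, _⟩ | ⟨w₃, w₂, l₃, l₂, a₂, he, rfl, hk', hp', hsf'⟩
    · exact absurd (Prod.mk.injEq .. ▸ he).2 (by simp)
    · obtain ⟨rfl, hl⟩ := Prod.mk.injEq .. ▸ he
      obtain ⟨rfl, ha⟩ := List.append_inj' hl rfl
      obtain rfl : a = a₂ := by simpa using ha
      exact K.succ _ _ _ _ _ (ih hk') hp (hsf.trans hsf')

private lemma K_eucl {W A : Type*} {R : W → W → Prop} (hR : Equivalence R)
    {Poss SF : A → W × List A → Prop} :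
    ∀ {s s₁ s₂ : W × List A},
      K R Poss SF s₁ s → K R Poss SF s₂ s → K R Poss SF s₂ s₁ := by
  intro s s₁ s₂ h1
  induction h1 generalizing s₂ with
  | init w w' hr =>
    intro h2
    rcases K_cases h2 with ⟨w₃, w₂, rfl, he, hr'⟩ | ⟨_, _, _, _, _, _, he, _, _, _⟩
    · obtain ⟨rfl, -⟩ := Prod.mk.injEq .. ▸ he
      exact K.init _ _ (hR.trans hr' (hR.symm hr))
    · exact absurd (Prod.mk.injEq .. ▸ he).2 (by simp)
  | succ w w' l l' a hk hp hsf ih =>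
    intro h2
    rcases K_cases h2 with ⟨_, _, _, he, _⟩ | ⟨w₃, w₂, l₃, l₂, a₂, rfl, he, hk', hp', hsf'⟩
    · exact absurd (Prod.mk.injEq .. ▸ he).2 (by simp)
    · obtain ⟨rfl, hl⟩ := Prod.mk.injEq .. ▸ he
      obtain ⟨rfl, ha⟩ := List.append_inj' hl rfl
      obtain rfl : a = a₂ := by simpa using ha
      exact K.succ _ _ _ _ _ (ih hk') hp' (hsf'.trans hsf.symm)

/-- preservation of knowledge properties under the successor-state
axiom for K (Scherl–Levesque): if `R` is an equivalence relation on initial worlds,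
then (i) K-related situations have the same action history, (ii) K is transitive,
(iii) K is Euclidean, and (iv) K is reflexive on executable situations. -/
theorem scherl_levesque_K_properties {W A : Type*} (R : W → W → Prop)
    (hR : Equivalence R) (Poss SF : A → W × List A → Prop) :
    (∀ (w w' : W) (l l' : List A), K R Poss SF (w', l') (w, l) → l' = l) ∧
    (∀ s₁ s₂ s₃ : W × List A,
      K R Poss SF s₁ s₂ → K R Poss SF s₂ s₃ → K R Poss SF s₁ s₃) ∧
    (∀ s s₁ s₂ : W × List A,
      K R Poss SF s₁ s → K R Poss SF s₂ s → K R Poss SF s₂ s₁) ∧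
    (∀ s : W × List A, Executable Poss s → K R Poss SF s s) := by
  refine ⟨?_, fun _ _ _ => K_trans hR, fun _ _ _ => K_eucl hR, ?_⟩
  · intro w w' l l' h
    generalize hEq1 : (w', l') = t₁ at h
    generalize hEq2 : (w, l) = t₂ at h
    induction h generalizing w w' l l' with
    | init =>
      obtain ⟨-, h1⟩ := Prod.mk.injEq .. ▸ hEq1
      obtain ⟨-, h2⟩ := Prod.mk.injEq .. ▸ hEq2
      rw [h1, h2]
    | succ wc wc' lc lc' ac hk hp hsf ih =>
      obtain ⟨-, h1⟩ := Prod.mk.injEq .. ▸ hEq1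
      obtain ⟨-, h2⟩ := Prod.mk.injEq .. ▸ hEq2
      rw [h1, h2, ih wc wc' lc lc' rfl rfl]
  · rintro ⟨w, l⟩ hex
    induction l using List.reverseRecOn with
    | nil => exact K.init _ _ (hR.refl w)
    | append_singleton l a ih =>
      refine K.succ _ _ _ _ _ (ih ?_) (hex l a [] (by simp)) Iff.rfl
      intro l₀ b l₁ h
      exact hex l₀ b (l₁ ++ [a]) (by simp [show l = l₀ ++ b :: l₁ from h])
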